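/- arXiv:2405.12517 — 3 statements merged into one kernel-verified Lean document; each statement's English description precedes it below -/
import Mathlib

section
/- Let k ≥ 2 be a natural number and λ a real number with λ > 1. Let A be a k×k matrix with real entries, and assume there exists an invertible k×k complex matrix U such that U·A·U⁻¹ is the diagonal matrix diag(λ, λ⁻¹, c₃, …, c_k), where c₃, …, c_k are complex numbers of absolute value 1. Then for every vector u ∈ ℝᵏ there exist real constants δ > 1 and C > 0 such that for all n ≥ 1, ‖λ⁻⁽ⁿ⁺¹⁾·Aⁿ⁺¹·u − λ⁻ⁿ·Aⁿ·u‖ ≤ C/δⁿ, where ‖·‖ denotes the Euclidean norm on ℝᵏ. -/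
set_option autoImplicit false

/-!
Put `P = λ⁻¹ A`, so that `λ⁻ⁿ Aⁿ u = Pⁿ u`. Over `ℂ`, `P` is conjugate by `U` to
`diag(1, λ⁻², c₃/λ, …, c_k/λ)`, hence `Pⁿ⁺¹ - Pⁿ` is conjugate to the diagonal matrix with entries
`qⁿ (q - 1)`, `q` running over these eigenvalues. The entry for `q = 1` vanishes and the others
have modulus at most `2 λ⁻ⁿ`, so in the `ℓ^∞` operator norm `‖Pⁿ⁺¹ - Pⁿ‖ = O(λ⁻ⁿ)`, and `δ = λ`
works.
-/

open Matrix
open scoped Matrix.Norms.Operator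

theorem Matrix.pow_eq_inv_mul_diagonal_pow_mul {ι R : Type*} [Fintype ι] [DecidableEq ι]
    [CommRing R] {U A : Matrix ι ι R} {d : ι → R}
    (hU : IsUnit U) (h : U * A * U⁻¹ = diagonal d) (m : ℕ) :
    A ^ m = U⁻¹ * diagonal (d ^ m) * U := by
  obtain ⟨V, rfl⟩ := hU
  rw [← coe_units_inv] at h ⊢
  have hA : A = ((V⁻¹ : (Matrix ι ι R)ˣ) : Matrix ι ι R) * diagonal d * V := by
    simp [← h, mul_assoc]
  rw [hA, Units.conj_pow', diagonal_pow]

theorem norm_pow_succ_sub_pow_le {𝕜 : Type*} [NormedField 𝕜] {x : 𝕜} {ρ : ℝ} (hρ₀ : 0 ≤ ρ)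
    (hρ₁ : ρ ≤ 1) (hx : x = 1 ∨ ‖x‖ ≤ ρ) (n : ℕ) : ‖x ^ (n + 1) - x ^ n‖ ≤ 2 * ρ ^ n := by
  rcases hx with rfl | hx
  · simp only [one_pow, sub_self, norm_zero]
    positivity
  have hx1 : ‖x - 1‖ ≤ 2 := by
    linarith [norm_sub_le x 1, norm_one (α := 𝕜)]
  calc ‖x ^ (n + 1) - x ^ n‖ = ‖x‖ ^ n * ‖x - 1‖ := by
        rw [pow_succ, ← mul_sub_one, norm_mul, norm_pow]
    _ ≤ ρ ^ n * 2 := by gcongr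
    _ = 2 * ρ ^ n := mul_comm _ _

theorem Matrix.linfty_opNorm_pow_succ_sub_pow_le {ι 𝕜 : Type*} [Fintype ι] [DecidableEq ι]
    [NormedField 𝕜] {U M : Matrix ι ι 𝕜} {q : ι → 𝕜} {ρ : ℝ} (hρ₀ : 0 ≤ ρ) (hρ₁ : ρ ≤ 1)
    (hU : IsUnit U) (h : U * M * U⁻¹ = diagonal q) (hq : ∀ i, q i = 1 ∨ ‖q i‖ ≤ ρ) (n : ℕ) :
    ‖M ^ (n + 1) - M ^ n‖ ≤ ‖U⁻¹‖ * ‖U‖ * (2 * ρ ^ n) := by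
  have hdiff : M ^ (n + 1) - M ^ n = U⁻¹ * diagonal (q ^ (n + 1) - q ^ n) * U := by
    rw [pow_eq_inv_mul_diagonal_pow_mul hU h, pow_eq_inv_mul_diagonal_pow_mul hU h, ← sub_mul,
      ← mul_sub, diagonal_sub]
    rfl
  have hdiag : ‖diagonal (q ^ (n + 1) - q ^ n)‖ ≤ 2 * ρ ^ n := by
    rw [linfty_opNorm_diagonal]
    exact (pi_norm_le_iff_of_nonneg (by positivity)).2 fun i =>
      norm_pow_succ_sub_pow_le hρ₀ hρ₁ (hq i) n
  calc ‖M ^ (n + 1) - M ^ n‖ ≤ ‖U⁻¹‖ * ‖diagonal (q ^ (n + 1) - q ^ n)‖ * ‖U‖ := by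
        rw [hdiff]
        exact (norm_mul_le _ _).trans (by gcongr; exact norm_mul_le _ _)
    _ ≤ ‖U⁻¹‖ * (2 * ρ ^ n) * ‖U‖ := by gcongr
    _ = ‖U⁻¹‖ * ‖U‖ * (2 * ρ ^ n) := by ring

theorem Matrix.linfty_opNorm_map_ofReal {m n : Type*} [Fintype m] [Fintype n]
    (B : Matrix m n ℝ) : ‖B.map ((↑) : ℝ → ℂ)‖ = ‖B‖ := by
  simp [linfty_opNorm_def, Complex.nnnorm_real]

theorem div_eq_one_or_norm_div_le_inv {k : ℕ} (hk : 2 ≤ k) {lam : ℝ} (hlam : 1 < lam)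
    {d : Fin k → ℂ} (hd0 : d ⟨0, zero_lt_two.trans_le hk⟩ = (lam : ℂ))
    (hd1 : d ⟨1, one_lt_two.trans_le hk⟩ = ((lam : ℂ))⁻¹)
    (hd2 : ∀ i : Fin k, 2 ≤ (i : ℕ) → ‖d i‖ = 1) (i : Fin k) :
    d i / lam = 1 ∨ ‖d i / lam‖ ≤ lam⁻¹ := by
  have hlam0 : 0 < lam := one_pos.trans hlam
  have hlamC : (lam : ℂ) ≠ 0 := by exact_mod_cast hlam0.ne'
  obtain ⟨_ | _ | j, hj⟩ := i
  · exact .inl (by rw [hd0, div_self hlamC])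
  · refine .inr ?_
    rw [hd1, norm_div, norm_inv, Complex.norm_real, Real.norm_of_nonneg hlam0.le]
    exact div_le_self (inv_nonneg.2 hlam0.le) hlam.le
  · refine .inr (le_of_eq ?_)
    rw [norm_div, hd2 ⟨j + 2, hj⟩ (by simp), Complex.norm_real, Real.norm_of_nonneg hlam0.le,
      one_div]

/-- **Lemma 5.5 (quantitative part).** If a real `k × k` matrix `A` is diagonalizable over `ℂ`
with diagonal entries `λ, λ⁻¹, c₃, …, c_k` where `λ > 1` and `|cᵢ| = 1`, then for every
`u ∈ ℝᵏ` the consecutive differences of `λ⁻ⁿ Aⁿ u` decay geometrically in Euclidean norm. -/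
theorem stmt1 (k : ℕ) (hk : 2 ≤ k) (lam : ℝ) (hlam : 1 < lam)
    (A : Matrix (Fin k) (Fin k) ℝ)
    (hdiag : ∃ (U : Matrix (Fin k) (Fin k) ℂ) (d : Fin k → ℂ), IsUnit U ∧
      U * A.map (fun x => (x : ℂ)) * U⁻¹ = Matrix.diagonal d ∧
      d ⟨0, by omega⟩ = (lam : ℂ) ∧ d ⟨1, by omega⟩ = ((lam : ℂ))⁻¹ ∧
      ∀ i : Fin k, 2 ≤ (i : ℕ) → ‖d i‖ = 1) :
    ∀ u : Fin k → ℝ, ∃ δ : ℝ, 1 < δ ∧ ∃ C : ℝ, 0 < C ∧ ∀ n : ℕ, 1 ≤ n →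
      ‖(EuclideanSpace.equiv (Fin k) ℝ).symm
          ((lam ^ (n + 1))⁻¹ • (A ^ (n + 1)).mulVec u - (lam ^ n)⁻¹ • (A ^ n).mulVec u)‖
        ≤ C / δ ^ n := by
  obtain ⟨U, d, hU, hconj, hd0, hd1, hd2⟩ := hdiag
  intro u
  have hlam0 : 0 < lam := one_pos.trans hlam
  set P := lam⁻¹ • A
  have hP : U * P.map ((↑) : ℝ → ℂ) * U⁻¹ = diagonal fun i => d i / lam := by
    rw [Matrix.map_smul' _ _ _ Complex.ofReal_mul, Matrix.mul_smul, Matrix.smul_mul, hconj]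
    ext i j
    simp [diagonal_apply, div_eq_inv_mul]
  have hq := div_eq_one_or_norm_div_le_inv hk hlam hd0 hd1 hd2
  have hw : ∀ n : ℕ, (lam ^ (n + 1))⁻¹ • (A ^ (n + 1)).mulVec u - (lam ^ n)⁻¹ • (A ^ n).mulVec u
      = (P ^ (n + 1) - P ^ n) *ᵥ u := by
    intro n
    simp [P, smul_pow, sub_mulVec, smul_mulVec, inv_pow]
  have hmap : ∀ m : ℕ, (P ^ m).map ((↑) : ℝ → ℂ) = P.map (↑) ^ m :=
    Complex.ofRealHom.mapMatrix.map_pow P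
  set L : (Fin k → ℝ) →L[ℝ] EuclideanSpace ℝ (Fin k) :=
    (EuclideanSpace.equiv (Fin k) ℝ).symm.toContinuousLinearMap
  set C := ‖L‖ * (‖U⁻¹‖ * ‖U‖ * 2) * ‖u‖
  refine ⟨lam, hlam, C + 1, by positivity, fun n _ => ?_⟩
  calc ‖L (_ : Fin k → ℝ)‖ ≤ ‖L‖ * ‖(P ^ (n + 1) - P ^ n) *ᵥ u‖ := by
        rw [hw]; exact L.le_opNorm _
    _ ≤ ‖L‖ * (‖P ^ (n + 1) - P ^ n‖ * ‖u‖) := by gcongr; exact linfty_opNorm_mulVec _ _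
    _ ≤ ‖L‖ * (‖U⁻¹‖ * ‖U‖ * (2 * lam⁻¹ ^ n) * ‖u‖) := by
        rw [← linfty_opNorm_map_ofReal, Matrix.map_sub _ (fun _ _ => Complex.ofReal_sub _ _),
          hmap, hmap]
        gcongr
        exact linfty_opNorm_pow_succ_sub_pow_le (by positivity) (inv_le_one_of_one_le₀ hlam.le)
          hU hP hq n
    _ = C / lam ^ n := by simp only [C, inv_pow]; ring
    _ ≤ (C + 1) / lam ^ n := by gcongr; linarith
end

section
/- Define the hybrid absolute value on ℂ by |0|_hyb = 0 and |c|_hyb = max(1, |c|) for c ≠ 0. Let r, s be real numbers with 0 < s ≤ r < 1, and let t₀ ∈ ℂ with |t₀| = s. Let a : ℤ → ℂ be a function such that a_n = 0 for all n < m for some integer m, and assume ∑_{n∈ℤ} |a_n|_hyb · rⁿ < ∞. Then the series ∑_{n∈ℤ} a_n·t₀ⁿ converges absolutely, and |∑_{n∈ℤ} a_n·t₀ⁿ|^{(log r)/(log s)} ≤ ∑_{n∈ℤ} |a_n|_hyb · rⁿ (with the convention 0^α = 0 for α > 0). -/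
set_option autoImplicit false

/-- The hybrid absolute value on `ℂ`: `|0|_hyb = 0` and `|c|_hyb = max (1, |c|)` for `c ≠ 0`. -/
noncomputable def hybAbs (c : ℂ) : ℝ := if c = 0 then 0 else max 1 ‖c‖

/-!
Put `α = log r / log s = log_s r ∈ (0, 1]`, so that `|t₀|^α = r`. Termwise,
`|aₙ t₀ⁿ|^α = |aₙ|^α rⁿ ≤ |aₙ|_hyb rⁿ`, because `|c|^α ≤ max (1, |c|)` for `c ≠ 0`.
Since `x ↦ x^α` is subadditive on `[0, ∞)`, the partial sums of `∑ |aₙ t₀ⁿ|` are bounded by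
`(∑ |aₙ|_hyb rⁿ)^{1/α}`, which gives absolute convergence, and then
`|∑ aₙ t₀ⁿ|^α ≤ (∑ |aₙ t₀ⁿ|)^α ≤ ∑ |aₙ t₀ⁿ|^α ≤ ∑ |aₙ|_hyb rⁿ`.
-/

namespace Real

variable {ι : Type*} {p : ℝ} {x : ι → ℝ}

theorem rpow_sum_le_sum_rpow (hp : 0 < p) (hp1 : p ≤ 1) (hx : 0 ≤ x) (s : Finset ι) :
    (∑ i ∈ s, x i) ^ p ≤ ∑ i ∈ s, x i ^ p := by
  classical
  induction s using Finset.induction with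
  | empty => simp [zero_rpow hp.ne']
  | insert j s hj ih =>
    rw [Finset.sum_insert hj, Finset.sum_insert hj]
    calc (x j + ∑ i ∈ s, x i) ^ p ≤ x j ^ p + (∑ i ∈ s, x i) ^ p :=
          rpow_add_le_add_rpow (hx j) (Finset.sum_nonneg fun i _ => hx i) hp.le hp1
      _ ≤ x j ^ p + ∑ i ∈ s, x i ^ p := by gcongr

theorem sum_le_tsum_rpow_rpow_inv (hp : 0 < p) (hp1 : p ≤ 1) (hx : 0 ≤ x)
    (hxp : Summable fun i => x i ^ p) (s : Finset ι) :
    ∑ i ∈ s, x i ≤ (∑' i, x i ^ p) ^ p⁻¹ := by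
  have hxp0 : 0 ≤ fun i => x i ^ p := fun i => rpow_nonneg (hx i) p
  rw [le_rpow_inv_iff_of_pos (Finset.sum_nonneg fun i _ => hx i) (tsum_nonneg hxp0) hp]
  exact (rpow_sum_le_sum_rpow hp hp1 hx s).trans (hxp.sum_le_tsum s fun i _ => hxp0 i)

theorem summable_of_summable_rpow (hp : 0 < p) (hp1 : p ≤ 1) (hx : 0 ≤ x)
    (hxp : Summable fun i => x i ^ p) : Summable x :=
  summable_of_sum_le hx (sum_le_tsum_rpow_rpow_inv hp hp1 hx hxp)

theorem rpow_tsum_le_tsum_rpow (hp : 0 < p) (hp1 : p ≤ 1) (hx : 0 ≤ x)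
    (hxp : Summable fun i => x i ^ p) : (∑' i, x i) ^ p ≤ ∑' i, x i ^ p :=
  (le_rpow_inv_iff_of_pos (tsum_nonneg hx) (tsum_nonneg fun i => rpow_nonneg (hx i) p) hp).1
    (tsum_le_of_sum_le hx (sum_le_tsum_rpow_rpow_inv hp hp1 hx hxp))

theorem logb_pos_of_le_of_lt_one {s r : ℝ} (hs : 0 < s) (hsr : s ≤ r) (hr : r < 1) :
    0 < logb s r :=
  logb_pos_of_base_lt_one hs (hsr.trans_lt hr) (hs.trans_le hsr) hr

theorem logb_le_one_of_le_of_lt_one {s r : ℝ} (hs : 0 < s) (hsr : s ≤ r) (hr : r < 1) :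
    logb s r ≤ 1 := by
  have hs1 : s < 1 := hsr.trans_lt hr
  calc logb s r ≤ logb s s :=
        (logb_le_logb_of_base_lt_one hs hs1 (hs.trans_le hsr) hs).2 hsr
    _ = 1 := logb_self_eq_one_iff.2 ⟨hs.ne', hs1.ne, by linarith⟩

end Real

theorem rpow_norm_le_hybAbs {α : ℝ} (hα0 : 0 < α) (hα1 : α ≤ 1) (c : ℂ) :
    ‖c‖ ^ α ≤ hybAbs c := by
  unfold hybAbs
  split_ifs with hc
  · simp [hc, Real.zero_rpow hα0.ne']
  rcases le_total ‖c‖ 1 with hc1 | hc1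
  · exact (Real.rpow_le_one (norm_nonneg c) hc1 hα0.le).trans (le_max_left _ _)
  · exact (Real.rpow_le_self_of_one_le hc1 hα1).trans (le_max_right _ _)

theorem rpow_norm_mul_zpow_le {α : ℝ} (hα0 : 0 < α) (hα1 : α ≤ 1) (c t : ℂ) (n : ℤ) :
    ‖c * t ^ n‖ ^ α ≤ hybAbs c * (‖t‖ ^ α) ^ n := by
  rw [norm_mul, norm_zpow, Real.mul_rpow (norm_nonneg c) (zpow_nonneg (norm_nonneg t) n),
    ← Real.rpow_zpow_comm (norm_nonneg t)]
  gcongr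
  exact rpow_norm_le_hybAbs hα0 hα1 c

theorem stmt9_general (r s : ℝ) (hs : 0 < s) (hsr : s ≤ r) (hr : r < 1)
    (t₀ : ℂ) (ht₀ : ‖t₀‖ = s)
    (a : ℤ → ℂ)
    (hsum : Summable (fun n : ℤ => hybAbs (a n) * r ^ n)) :
    Summable (fun n : ℤ => ‖a n * t₀ ^ n‖) ∧
    ‖∑' n : ℤ, a n * t₀ ^ n‖ ^ (Real.log r / Real.log s)
      ≤ ∑' n : ℤ, hybAbs (a n) * r ^ n := by
  change _ ∧ _ ^ Real.logb s r ≤ _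
  have hα0 := Real.logb_pos_of_le_of_lt_one hs hsr hr
  have hα1 := Real.logb_le_one_of_le_of_lt_one hs hsr hr
  have hr_eq : ‖t₀‖ ^ Real.logb s r = r := by
    rw [ht₀, Real.rpow_logb hs (hsr.trans_lt hr).ne (hs.trans_le hsr)]
  have hterm (n : ℤ) : ‖a n * t₀ ^ n‖ ^ Real.logb s r ≤ hybAbs (a n) * r ^ n := by
    simpa only [hr_eq] using rpow_norm_mul_zpow_le hα0 hα1 (a n) t₀ n
  have hnorm0 : 0 ≤ fun n : ℤ => ‖a n * t₀ ^ n‖ := fun n => norm_nonneg _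
  have hsumα : Summable fun n : ℤ => ‖a n * t₀ ^ n‖ ^ Real.logb s r :=
    hsum.of_nonneg_of_le (fun n => Real.rpow_nonneg (hnorm0 n) _) hterm
  have habs := Real.summable_of_summable_rpow hα0 hα1 hnorm0 hsumα
  refine ⟨habs, ?_⟩
  calc ‖∑' n : ℤ, a n * t₀ ^ n‖ ^ Real.logb s r
      ≤ (∑' n : ℤ, ‖a n * t₀ ^ n‖) ^ Real.logb s r := by
        gcongr
        exact norm_tsum_le_tsum_norm habs
    _ ≤ ∑' n : ℤ, ‖a n * t₀ ^ n‖ ^ Real.logb s r :=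
        Real.rpow_tsum_le_tsum_rpow hα0 hα1 hnorm0 hsumα
    _ ≤ ∑' n : ℤ, hybAbs (a n) * r ^ n := hsumα.tsum_le_tsum hterm hsum

/-- **The seminorm `τ(t₀)` is bounded by the hybrid norm `‖·‖_{hyb,r}`.** For a Laurent series
`f = ∑ aₙ tⁿ` with `∑ |aₙ|_hyb rⁿ < ∞` and a point `t₀` with `0 < |t₀| = s ≤ r < 1`, the series
`∑ aₙ t₀ⁿ` converges absolutely and `|f(t₀)|^{log r / log s} ≤ ∑ |aₙ|_hyb rⁿ`. -/
theorem stmt9 (r s : ℝ) (hs : 0 < s) (hsr : s ≤ r) (hr : r < 1)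
    (t₀ : ℂ) (ht₀ : ‖t₀‖ = s)
    (a : ℤ → ℂ) (m : ℤ) (hvanish : ∀ n : ℤ, n < m → a n = 0)
    (hsum : Summable (fun n : ℤ => hybAbs (a n) * r ^ n)) :
    Summable (fun n : ℤ => ‖a n * t₀ ^ n‖) ∧
    ‖∑' n : ℤ, a n * t₀ ^ n‖ ^ (Real.log r / Real.log s)
      ≤ ∑' n : ℤ, hybAbs (a n) * r ^ n :=
  stmt9_general r s hs hsr hr t₀ ht₀ a hsum
end

section
/- Define the hybrid absolute value on ℂ by |0|_hyb = 0 and |c|_hyb = max(1, |c|) for c ≠ 0, and fix a real number r with 0 < r < 1. Let a, b : ℤ → ℂ be functions with a_n = 0 for n < m and b_n = 0 for n < m′ for some integers m, m′, and assume ‖a‖ := ∑_{n∈ℤ} |a_n|_hyb·rⁿ < ∞ and ‖b‖ := ∑_{n∈ℤ} |b_n|_hyb·rⁿ < ∞. Let c : ℤ → ℂ be the convolution c_n = ∑_{i+j=n} a_i·b_j (the coefficient sequence of the product of the corresponding Laurent series). Then ∑_{n∈ℤ} |c_n|_hyb·rⁿ ≤ ‖a‖·‖b‖. -/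
/-!
The hybrid absolute value is submultiplicative, and it is subadditive even on infinite sums
whose terms have summable hybrid values. Since the weight `rⁿ` is multiplicative,
`|cₙ|_hyb rⁿ` is therefore bounded by the `n`-th term of the convolution of the weighted
sequences `|aᵢ|_hyb rⁱ` and `|bⱼ|_hyb rʲ`; for nonnegative summable sequences on a group, the
convolution sums to the product of the sums (reindex `(i, j) ↦ (i + j, i)`).
-/

set_option autoImplicit false

section Convolution

variable {G : Type*} [AddCommGroup G] {f g : G → ℝ}

theorem hasSum_prod_mul_sub_of_nonneg (hf : Summable f) (hg : Summable g) (hf0 : 0 ≤ f)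
    (hg0 : 0 ≤ g) :
    HasSum (fun q : G × G => f q.2 * g (q.1 - q.2)) ((∑' i, f i) * ∑' j, g j) := by
  let e : G × G ≃ G × G :=
    ((Equiv.refl G).prodShear fun i => Equiv.addLeft i).trans (Equiv.prodComm G G)
  rw [← e.hasSum_iff, hf.tsum_mul_tsum hg (hf.mul_of_nonneg hg hf0 hg0)]
  simpa [e, Function.comp_def] using (hf.mul_of_nonneg hg hf0 hg0).hasSum

theorem summable_mul_sub_of_nonneg (hf : Summable f) (hg : Summable g) (hf0 : 0 ≤ f)
    (hg0 : 0 ≤ g) (n : G) : Summable fun i => f i * g (n - i) :=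
  (hasSum_prod_mul_sub_of_nonneg hf hg hf0 hg0).summable.prod_factor n

theorem hasSum_tsum_mul_sub_of_nonneg (hf : Summable f) (hg : Summable g) (hf0 : 0 ≤ f)
    (hg0 : 0 ≤ g) :
    HasSum (fun n => ∑' i, f i * g (n - i)) ((∑' i, f i) * ∑' j, g j) :=
  (hasSum_prod_mul_sub_of_nonneg hf hg hf0 hg0).prod_fiberwise fun n =>
    (summable_mul_sub_of_nonneg hf hg hf0 hg0 n).hasSum

end Convolution

@[simp]
theorem hybAbs_zero : hybAbs 0 = 0 := by simp [hybAbs]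

theorem hybAbs_of_ne_zero {x : ℂ} (hx : x ≠ 0) : hybAbs x = max 1 ‖x‖ := if_neg hx

theorem hybAbs_nonneg (x : ℂ) : 0 ≤ hybAbs x := by
  unfold hybAbs; split_ifs <;> positivity

theorem one_le_hybAbs {x : ℂ} (hx : x ≠ 0) : 1 ≤ hybAbs x := by
  rw [hybAbs_of_ne_zero hx]; exact le_max_left _ _

theorem norm_le_hybAbs (x : ℂ) : ‖x‖ ≤ hybAbs x := by
  by_cases hx : x = 0
  · simp [hx]
  · rw [hybAbs_of_ne_zero hx]; exact le_max_right _ _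

theorem hybAbs_mul_le (x y : ℂ) : hybAbs (x * y) ≤ hybAbs x * hybAbs y := by
  by_cases hx : x = 0
  · simp [hx]
  by_cases hy : y = 0
  · simp [hy]
  rw [hybAbs_of_ne_zero hx, hybAbs_of_ne_zero hy, hybAbs_of_ne_zero (mul_ne_zero hx hy),
    norm_mul]
  exact max_le (one_le_mul_of_one_le_of_one_le (le_max_left _ _) (le_max_left _ _))
    (mul_le_mul (le_max_right _ _) (le_max_right _ _) (norm_nonneg _) (by positivity))

theorem hybAbs_tsum_le {ι : Type*} {f : ι → ℂ} (hf : Summable fun i => hybAbs (f i)) :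
    hybAbs (∑' i, f i) ≤ ∑' i, hybAbs (f i) := by
  by_cases h : ∑' i, f i = 0
  · rw [h, hybAbs_zero]; exact tsum_nonneg fun i => hybAbs_nonneg _
  -- a nonzero sum has a nonzero term, whose hybrid absolute value is already `≥ 1`
  obtain ⟨i, hi⟩ : ∃ i, f i ≠ 0 := by
    by_contra! h'
    simp [h'] at h
  have hnorm : Summable fun i => ‖f i‖ :=
    hf.of_nonneg_of_le (fun _ => norm_nonneg _) fun i => norm_le_hybAbs _
  rw [hybAbs_of_ne_zero h]
  refine max_le ((one_le_hybAbs hi).trans (hf.le_tsum i fun j _ => hybAbs_nonneg _)) ?_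
  exact (norm_tsum_le_tsum_norm hnorm).trans
    (hnorm.tsum_le_tsum (fun i => norm_le_hybAbs _) hf)

theorem hybAbs_tsum_mul_le {ι : Type*} {f g : ι → ℂ}
    (hfg : Summable fun i => hybAbs (f i) * hybAbs (g i)) :
    hybAbs (∑' i, f i * g i) ≤ ∑' i, hybAbs (f i) * hybAbs (g i) := by
  have hle : ∀ i, hybAbs (f i * g i) ≤ hybAbs (f i) * hybAbs (g i) := fun i => hybAbs_mul_le _ _
  have hs : Summable fun i => hybAbs (f i * g i) :=
    hfg.of_nonneg_of_le (fun _ => hybAbs_nonneg _) hle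
  exact (hybAbs_tsum_le hs).trans (hs.tsum_le_tsum hle hfg)

theorem stmt10_general (r : ℝ) (hr0 : 0 < r)
    (a b : ℤ → ℂ)
    (hsa : Summable (fun n : ℤ => hybAbs (a n) * r ^ n))
    (hsb : Summable (fun n : ℤ => hybAbs (b n) * r ^ n))
    (c : ℤ → ℂ) (hc : ∀ n : ℤ, c n = ∑' i : ℤ, a i * b (n - i)) :
    Summable (fun n : ℤ => hybAbs (c n) * r ^ n) ∧
    ∑' n : ℤ, hybAbs (c n) * r ^ n ≤
      (∑' n : ℤ, hybAbs (a n) * r ^ n) * (∑' n : ℤ, hybAbs (b n) * r ^ n) := by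
  have hA : 0 ≤ fun n : ℤ => hybAbs (a n) * r ^ n := fun n => by
    have := hybAbs_nonneg (a n); positivity
  have hB : 0 ≤ fun n : ℤ => hybAbs (b n) * r ^ n := fun n => by
    have := hybAbs_nonneg (b n); positivity
  have hconv := hasSum_tsum_mul_sub_of_nonneg hsa hsb hA hB
  have hweight : ∀ n i : ℤ, hybAbs (a i) * r ^ i * (hybAbs (b (n - i)) * r ^ (n - i)) =
      hybAbs (a i) * hybAbs (b (n - i)) * r ^ n := fun n i => by
    rw [mul_mul_mul_comm, ← zpow_add₀ hr0.ne', add_sub_cancel]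
  have hpointwise : ∀ n : ℤ, hybAbs (c n) * r ^ n ≤
      ∑' i, hybAbs (a i) * r ^ i * (hybAbs (b (n - i)) * r ^ (n - i)) := fun n => by
    have hfiber := summable_mul_sub_of_nonneg hsa hsb hA hB n
    simp only [hweight] at hfiber ⊢
    rw [tsum_mul_right, hc n]
    exact mul_le_mul_of_nonneg_right
      (hybAbs_tsum_mul_le ((summable_mul_right_iff (zpow_ne_zero n hr0.ne')).1 hfiber))
      (zpow_nonneg hr0.le n)
  have hsum : Summable fun n : ℤ => hybAbs (c n) * r ^ n :=
    hconv.summable.of_nonneg_of_le (fun n => by have := hybAbs_nonneg (c n); positivity)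
      hpointwise
  exact ⟨hsum, hconv.tsum_eq ▸ hsum.tsum_le_tsum hpointwise hconv.summable⟩

/-- **Submultiplicativity of the hybrid norm `‖·‖_{hyb,r}`.** If `a` and `b` are coefficient
sequences of Laurent series with finite hybrid norm and `c` is their convolution
(`cₙ = ∑_{i+j=n} aᵢ bⱼ`), then `∑ |cₙ|_hyb rⁿ ≤ (∑ |aₙ|_hyb rⁿ) · (∑ |bₙ|_hyb rⁿ)`. -/
theorem stmt10 (r : ℝ) (hr0 : 0 < r) (hr1 : r < 1)
    (a b : ℤ → ℂ) (m m' : ℤ)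
    (hva : ∀ n : ℤ, n < m → a n = 0) (hvb : ∀ n : ℤ, n < m' → b n = 0)
    (hsa : Summable (fun n : ℤ => hybAbs (a n) * r ^ n))
    (hsb : Summable (fun n : ℤ => hybAbs (b n) * r ^ n))
    (c : ℤ → ℂ) (hc : ∀ n : ℤ, c n = ∑' i : ℤ, a i * b (n - i)) :
    Summable (fun n : ℤ => hybAbs (c n) * r ^ n) ∧
    ∑' n : ℤ, hybAbs (c n) * r ^ n ≤
      (∑' n : ℤ, hybAbs (a n) * r ^ n) * (∑' n : ℤ, hybAbs (b n) * r ^ n) :=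
  stmt10_general r hr0 a b hsa hsb c hc
end
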